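/- Let p be a prime and let G be a finite group that is a 𝒫₀(p)-group with respect to a pair (ρ,τ). Then G is a 𝒫₁⁺(p)-group with respect to (ρ,τ). -/

import Mathlib

open Pointwise

/-- A group is cyclic or dihedral. -/
def IsCyclicOrDihedral (H : Type*) [Group H] : Prop :=
  IsCyclic H ∨ ∃ n : ℕ, 0 < n ∧ Nonempty (H ≃* DihedralGroup n)

/-- `G` is a `𝒫₀(p)`-group with respect to `(ρ, τ)`. -/
def IsP0 (p : ℕ) {G : Type*} [Group G] (ρ τ : G) : Prop :=
  orderOf τ = 2 ∧ Subgroup.closure {ρ, τ} = ⊤ ∧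
    ∃ n : ℕ, 0 < n ∧
      Nat.card G / orderOf ρ +
          Nat.card G / Nat.card (Subgroup.closure {τ, ρ⁻¹ * τ * ρ} : Subgroup G) +
          p ^ n =
        Nat.card G / 2

/-- `G` is a `𝒫₁(p)`-group with respect to subgroups `H₁` and `H₂`. -/
def IsP1With (p : ℕ) {G : Type*} [Group G] (H₁ H₂ : Subgroup G) : Prop :=
  IsCyclicOrDihedral H₁ ∧ IsCyclicOrDihedral H₂ ∧
    ∃ n : ℕ, Nat.card G = p ^ n * Nat.lcm (Nat.card H₁) (Nat.card H₂)

/-- `G` is a `𝒫₁(p)`-group. -/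
def IsP1 (p : ℕ) (G : Type*) [Group G] : Prop :=
  ∃ H₁ H₂ : Subgroup G, IsP1With p H₁ H₂

/-- `G` is a `𝒫₁⁺(p)`-group with respect to `(ρ, τ)`. -/
def IsP1Plus (p : ℕ) {G : Type*} [Group G] (ρ τ : G) : Prop :=
  orderOf τ ≤ 2 ∧ Subgroup.closure {ρ, τ} = ⊤ ∧
    (Odd p → Subgroup.closure {ρ⁻¹ * τ⁻¹ * ρ * τ, ρ} = ⊤) ∧
    IsP1With p (Subgroup.closure {τ, ρ⁻¹ * τ * ρ}) (Subgroup.zpowers ρ)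

/-- `G` is a `𝒫₂(p)`-group. -/
def IsP2 (p : ℕ) (G : Type*) [Group G] : Prop :=
  ∀ r : ℕ, r.Prime → r ≠ p → ∀ S : Sylow r G, IsCyclicOrDihedral (S : Subgroup G)

/-- `G` is a `𝒫₂⁺(p)`-group with respect to `(ρ, τ)`. -/
def IsP2Plus (p : ℕ) {G : Type*} [Group G] (ρ τ : G) : Prop :=
  orderOf τ ≤ 2 ∧ Subgroup.closure {ρ, τ} = ⊤ ∧
    (Odd p → Subgroup.closure {ρ⁻¹ * τ⁻¹ * ρ * τ, ρ} = ⊤) ∧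
    IsP2 p G

/-- A Hall `{2,3}`-subgroup. -/
def IsHall23 {G : Type*} [Group G] (H : Subgroup G) : Prop :=
  (∃ i j : ℕ, Nat.card H = 2 ^ i * 3 ^ j) ∧ Nat.Coprime H.index 6

/-- A Hall `{2,3}'`-subgroup. -/
def IsHall23' {G : Type*} [Group G] (K : Subgroup G) : Prop :=
  Nat.Coprime (Nat.card K) 6 ∧ ∃ i j : ℕ, K.index = 2 ^ i * 3 ^ j

/-- The projective special linear group of degree 2 over `R`. -/
abbrev ProjSL2 (R : Type*) [CommRing R] : Type _ :=
  Matrix.SpecialLinearGroup (Fin 2) R ⧸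
    Subgroup.center (Matrix.SpecialLinearGroup (Fin 2) R)

/-- The projective general linear group of degree 2 over `R`. -/
abbrev ProjGL2 (R : Type*) [CommRing R] : Type _ :=
  Matrix.GeneralLinearGroup (Fin 2) R ⧸
    Subgroup.center (Matrix.GeneralLinearGroup (Fin 2) R)

/-!
The subgroup `⟨τ, τ^ρ⟩` is generated by two involutions, so it is dihedral of order `2 |σ|` with
`σ = τ τ^ρ`, and `⟨ρ⟩` is cyclic. Writing `|G| = k · lcm(|⟨τ, τ^ρ⟩|, |ρ|)`, the integer `k` divides
each of `|G|/|ρ|`, `|G|/|⟨τ, τ^ρ⟩|` and `|G|/2`, hence divides `p^n`, so it is a power of `p`.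

For odd `p`: the subgroup `H = ⟨[ρ, τ], ρ⟩ = ⟨ρ, ρ^τ⟩` is normalized by `ρ` and by `τ` (which swaps
the two generators), so it is normal of index at most `2`. If the index were `2`, the defining
equation, read inside `H`, forces `σ ∈ H` to have even order and odd index `|H|/|σ|`. Then left
multiplication by `σ` is an odd permutation of `H`. As the sign of left multiplication by `x` is a
homomorphism in `x` that depends only on the order of `x`, the elements `ρ` and `ρ σ⁻¹ = ρ^τ`, which
have the same order, would get opposite signs.
-/

open Subgroup

section RegularSign

open Equiv Equiv.Perm

variable {H : Type*} [Group H] [Fintype H] [DecidableEq H]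

theorem orderOf_cycleOf_toPerm {x : H} (hx : x ≠ 1) (a : H) :
    orderOf ((MulAction.toPerm x : Perm H).cycleOf a) = orderOf x := by
  have hxa : (MulAction.toPerm x : Perm H) a ≠ a := by simpa using hx
  have hcycle := isCycle_cycleOf _ hxa
  refine orderOf_eq_orderOf_iff.mpr fun n => ?_
  rw [hcycle.pow_eq_one_iff' (by rwa [cycleOf_apply_self]), cycleOf_pow_apply_self,
    ← MulAction.toPermHom_apply, ← map_pow, MulAction.toPermHom_apply, MulAction.toPerm_apply,
    smul_eq_mul, mul_eq_right]

theorem cycleType_toPerm {x : H} (hx : x ≠ 1) :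
    (MulAction.toPerm x : Perm H).cycleType =
      Multiset.replicate (Fintype.card H / orderOf x) (orderOf x) := by
  set π : Perm H := MulAction.toPerm x
  have hlen : ∀ n ∈ π.cycleType, n = orderOf x := by
    simp only [cycleType_def, Multiset.mem_map, Function.comp_apply]
    rintro n ⟨c, hc, rfl⟩
    have hc' := (mem_cycleFactorsFinset_iff.mp hc).1
    obtain ⟨a, ha⟩ := hc'.nonempty_support
    rw [← hc'.orderOf, cycle_is_cycleOf ha hc, orderOf_cycleOf_toPerm hx]
  have hsupp : π.support = Finset.univ := by
    ext a
    simpa [π] using hx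
  have hsum : π.cycleType.card * orderOf x = Fintype.card H := by
    rw [← Finset.card_univ, ← hsupp, ← sum_cycleType, Multiset.eq_replicate_card.mpr hlen]
    simp
  rw [Multiset.eq_replicate_card.mpr hlen, ← hsum, Nat.mul_div_cancel _ (orderOf_pos x)]

theorem sign_toPerm (x : H) :
    sign (MulAction.toPerm x : Perm H) =
      (-(-1) ^ orderOf x) ^ (Fintype.card H / orderOf x) := by
  rcases eq_or_ne x 1 with rfl | hx
  · simp [MulAction.toPerm_one]
  · rw [sign_of_cycleType', cycleType_toPerm hx, Multiset.map_replicate, Multiset.prod_replicate]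

end RegularSign

theorem orderOf_mul_ne_orderOf {H : Type*} [Group H] [Finite H] {σ : H}
    (hσ : Even (orderOf σ)) (hindex : Odd (Nat.card H / orderOf σ)) (ρ : H) :
    orderOf (ρ * σ) ≠ orderOf ρ := by
  classical
  have := Fintype.ofFinite H
  let χ : H →* ℤˣ := Equiv.Perm.sign.comp (MulAction.toPermHom H H)
  have hχ : ∀ x, χ x = (-(-1) ^ orderOf x) ^ (Fintype.card H / orderOf x) := sign_toPerm
  have hχσ : χ σ = -1 := by
    rw [hχ, hσ.neg_one_pow, ← Nat.card_eq_fintype_card, hindex.neg_one_pow]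
  intro h
  refine units_ne_neg_self (χ ρ) ?_
  calc χ ρ = χ (ρ * σ) := by rw [hχ, hχ, h]
    _ = -χ ρ := by rw [map_mul, hχσ, mul_neg_one]

namespace DihedralGroup

variable {G : Type*} [Group G] {n : ℕ}

def lift (ψ : Multiplicative (ZMod n) →* G) (t : G) (ht : t * t = 1)
    (hψ : ∀ i, t * ψ i * t = (ψ i)⁻¹) : DihedralGroup n →* G where
  toFun
    | r i => ψ (.ofAdd i)
    | sr i => t * ψ (.ofAdd i)
  map_one' := map_one ψ
  map_mul' := by
    have hswap : ∀ i, ψ i * t = t * (ψ i)⁻¹ := fun i => by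
      rw [← hψ, ← mul_assoc, ← mul_assoc, ht, one_mul]
    rintro (i | i) (j | j)
    · exact map_mul ψ _ _
    · show t * ψ (.ofAdd (j - i)) = ψ (.ofAdd i) * (t * ψ (.ofAdd j))
      rw [← mul_assoc, hswap, mul_assoc, sub_eq_neg_add, ofAdd_add, ofAdd_neg, map_mul, map_inv]
    · show t * ψ (.ofAdd (i + j)) = t * ψ (.ofAdd i) * ψ (.ofAdd j)
      rw [ofAdd_add, map_mul, mul_assoc]
    · show ψ (.ofAdd (j - i)) = t * ψ (.ofAdd i) * (t * ψ (.ofAdd j))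
      rw [← mul_assoc, hψ, sub_eq_neg_add, ofAdd_add, ofAdd_neg, map_mul, map_inv]

@[simp]
theorem lift_r (ψ : Multiplicative (ZMod n) →* G) (t : G) (ht : t * t = 1)
    (hψ : ∀ i, t * ψ i * t = (ψ i)⁻¹) (i : ZMod n) : lift ψ t ht hψ (r i) = ψ (.ofAdd i) :=
  rfl

@[simp]
theorem lift_sr (ψ : Multiplicative (ZMod n) →* G) (t : G) (ht : t * t = 1)
    (hψ : ∀ i, t * ψ i * t = (ψ i)⁻¹) (i : ZMod n) : lift ψ t ht hψ (sr i) = t * ψ (.ofAdd i) :=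
  rfl

theorem lift_injective {ψ : Multiplicative (ZMod n) →* G} {t : G} {ht : t * t = 1}
    {hψ : ∀ i, t * ψ i * t = (ψ i)⁻¹} (hψinj : Function.Injective ψ) (htψ : t ∉ ψ.range) :
    Function.Injective (lift ψ t ht hψ) := by
  refine (injective_iff_map_eq_one _).mpr ?_
  rintro (i | i) h
  · exact congrArg r (hψinj (h.trans (map_one ψ).symm))
  · exact (htψ ⟨(.ofAdd i)⁻¹, by rw [map_inv]; exact (eq_inv_of_mul_eq_one_left h).symm⟩).elim

end DihedralGroup

section Involutions

variable {G : Type*} [Group G] {t t' : G}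

theorem notMem_zpowers_mul_of_orderOf_eq_two (ht : orderOf t = 2) (ht' : orderOf t' = 2) :
    t ∉ zpowers (t * t') := by
  rintro ⟨k, hk : (t * t') ^ k = t⟩
  have htt : t * t = 1 := by rw [← pow_two, ← ht, pow_orderOf_eq_one]
  have ht't' : t' * t' = 1 := by rw [← pow_two, ← ht', pow_orderOf_eq_one]
  have hcomm := (Commute.zpow_self (t * t') k).eq
  rw [hk] at hcomm
  have hsq : (t * t') ^ (2 : ℤ) = 1 := by
    rw [← mul_assoc, htt, one_mul] at hcomm
    rw [zpow_two, ← mul_assoc, ← hcomm, ht't']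
  rcases Int.even_or_odd' k with ⟨l, rfl | rfl⟩
  · rw [zpow_mul, hsq, one_zpow] at hk
    simp [← hk] at ht
  · rw [zpow_add, zpow_mul, hsq, one_zpow, one_mul, zpow_one, mul_eq_left] at hk
    simp [hk] at ht'

theorem nonempty_mulEquiv_dihedralGroup_of_orderOf_eq_two
    (ht : orderOf t = 2) (ht' : orderOf t' = 2) :
    Nonempty (closure {t, t'} ≃* DihedralGroup (orderOf (t * t'))) := by
  set σ := t * t'
  have htt : t * t = 1 := by rw [← pow_two, ← ht, pow_orderOf_eq_one]
  have ht't' : t' * t' = 1 := by rw [← pow_two, ← ht', pow_orderOf_eq_one]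
  let e : Multiplicative (ZMod (orderOf σ)) ≃* zpowers σ :=
    zmodMulEquivOfGenerator (g := ⟨σ, mem_zpowers σ⟩)
      (fun ⟨_, k, hk⟩ => ⟨k, Subtype.ext hk⟩) (Nat.card_zpowers σ)
  let ψ := (zpowers σ).subtype.comp e.toMonoidHom
  have hψ : ∀ k : ℤ, ψ (.ofAdd k) = σ ^ k := fun k => by
    simp [ψ, e]
  have hψconj : ∀ i, t * ψ i * t = (ψ i)⁻¹ := by
    intro i
    obtain ⟨k, hk⟩ := ZMod.intCast_surjective i.toAdd
    have hσ : t * σ * t⁻¹ = σ⁻¹ := by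
      simp only [σ, mul_inv_rev, inv_eq_of_mul_eq_one_right htt, inv_eq_of_mul_eq_one_right ht't',
        ← mul_assoc, htt, one_mul]
    rw [← ofAdd_toAdd i, ← hk, hψ]
    calc t * σ ^ k * t = MulAut.conj t (σ ^ k) := by
          rw [MulAut.conj_apply, inv_eq_of_mul_eq_one_right htt]
      _ = (σ ^ k)⁻¹ := by rw [map_zpow, MulAut.conj_apply, hσ, inv_zpow]
  have hψinj : Function.Injective ψ := (zpowers σ).subtype_injective.comp e.injective
  have htψ : t ∉ ψ.range := by
    rintro ⟨i, hi⟩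
    have hmem : ψ i ∈ zpowers σ := (e i).2
    rw [hi] at hmem
    exact notMem_zpowers_mul_of_orderOf_eq_two ht ht' hmem
  set φ := DihedralGroup.lift ψ t htt hψconj
  have hσmem : σ ∈ closure {t, t'} := mul_mem (subset_closure (by simp)) (subset_closure (by simp))
  have hrange : φ.range = closure {t, t'} := by
    apply le_antisymm
    · rintro _ ⟨i | i, rfl⟩
      · exact zpowers_le.mpr hσmem (e _).2
      · exact mul_mem (subset_closure (by simp)) (zpowers_le.mpr hσmem (e _).2)
    · rw [closure_le]
      rintro _ (rfl | rfl)
      · exact ⟨.sr 0, by simp [φ]⟩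
      · exact ⟨.sr 1, by simp [φ, ψ, e, σ, ← mul_assoc, htt]⟩
  exact ⟨(MulEquiv.subgroupCongr hrange.symm).trans
    (MonoidHom.ofInjective (DihedralGroup.lift_injective hψinj htψ)).symm⟩

end Involutions

theorem exists_eq_pow_mul_lcm {N a b p n : ℕ} (hp : p.Prime) (ha : a ∣ N) (hb : b ∣ N)
    (h2a : 2 ∣ a) (h : N / b + N / a + p ^ n = N / 2) : ∃ j, N = p ^ j * Nat.lcm a b := by
  obtain ⟨k, hk⟩ := Nat.lcm_dvd ha hb
  have hdvd : ∀ d, d ∣ Nat.lcm a b → k ∣ N / d := fun d hd =>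
    Nat.dvd_div_of_mul_dvd (hk ▸ mul_dvd_mul_right hd k)
  have hkp : k ∣ p ^ n := by
    have hdiff := Nat.dvd_sub (hdvd 2 (h2a.trans (Nat.dvd_lcm_left a b)))
      (dvd_add (hdvd b (Nat.dvd_lcm_right a b)) (hdvd a (Nat.dvd_lcm_left a b)))
    rwa [← h, Nat.add_sub_cancel_left] at hdiff
  obtain ⟨j, -, rfl⟩ := (Nat.dvd_prime_pow hp).mp hkp
  exact ⟨j, by rw [hk, mul_comm]⟩

theorem even_and_odd_div_of_two_mul_add {M a s q : ℕ} (hs : s ∣ M) (hq : Odd q)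
    (h : 2 * a + M / s + q = M) : Even s ∧ Odd (M / s) := by
  obtain ⟨k, rfl⟩ := hs
  rcases Nat.eq_zero_or_pos s with rfl | hs0
  · simp only [zero_mul, Nat.zero_div, add_zero, Nat.add_eq_zero_iff] at h
    exact absurd hq (by simp [h.2])
  rw [Nat.mul_div_cancel_left k hs0] at h ⊢
  have hk : Odd k := by
    by_contra hk
    rw [Nat.not_odd_iff_even] at hk
    have hodd : Odd (s * k) := h ▸ ((even_two_mul a).add hk).add_odd hq
    exact Nat.not_even_iff_odd.mpr hodd (hk.mul_left s)
  have heven : Even (s * k) := h ▸ ((even_two_mul a).add_odd hk).add_odd hq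
  exact ⟨(Nat.even_mul.mp heven).resolve_right (Nat.not_even_iff_odd.mpr hk), hk⟩

section IndexTwo

variable {G : Type*} [Group G] {ρ τ : G}

theorem closure_inv_mul_pair (a b : G) : closure {a⁻¹ * b, a} = closure {a, b} := by
  apply le_antisymm <;> rw [closure_le, Set.insert_subset_iff, Set.singleton_subset_iff]
  · exact ⟨mul_mem (inv_mem (subset_closure (by simp))) (subset_closure (by simp)),
      subset_closure (by simp)⟩
  · refine ⟨subset_closure (by simp), ?_⟩
    simpa using mul_mem (subset_closure (by simp : a ∈ ({a⁻¹ * b, a} : Set G)))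
      (subset_closure (by simp : a⁻¹ * b ∈ ({a⁻¹ * b, a} : Set G)))

theorem normal_closure_pair_conj (hτ : τ * τ = 1) (hgen : closure {ρ, τ} = ⊤) :
    (closure {ρ, τ⁻¹ * ρ * τ}).Normal := by
  have hτinv : τ⁻¹ = τ := inv_eq_of_mul_eq_one_right hτ
  rw [← normalizer_eq_top_iff, eq_top_iff, ← hgen, closure_le]
  rintro _ (rfl | rfl)
  · exact le_normalizer (subset_closure (by simp))
  · refine normalizer_le_normalizer_closure _ (mem_normalizer_fintype ?_)
    rintro _ (rfl | rfl)
    · simp [hτinv]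
    · simp [mul_assoc]

theorem index_closure_pair_conj_dvd_two (hτ : τ * τ = 1) (hgen : closure {ρ, τ} = ⊤) :
    (closure {ρ, τ⁻¹ * ρ * τ}).index ∣ 2 := by
  set H := closure {ρ, τ⁻¹ * ρ * τ}
  have := normal_closure_pair_conj hτ hgen
  have hcyc : ∀ x : G ⧸ H, x ∈ zpowers (τ : G ⧸ H) := by
    rw [← eq_top_iff', eq_top_iff,
      ← map_top_of_surjective _ (QuotientGroup.mk'_surjective H), ← hgen, MonoidHom.map_closure,
      closure_le, Set.image_pair, Set.insert_subset_iff, Set.singleton_subset_iff]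
    refine ⟨?_, mem_zpowers _⟩
    rw [QuotientGroup.mk'_apply, (QuotientGroup.eq_one_iff ρ).mpr (subset_closure (by simp))]
    exact one_mem _
  rw [index_eq_card, ← orderOf_eq_card_of_forall_mem_zpowers hcyc]
  exact orderOf_dvd_of_pow_eq_one <| by
    rw [← QuotientGroup.mk_pow, pow_two, hτ, QuotientGroup.mk_one]

theorem closure_conj_pair_eq_top_of_odd [Finite G] {q : ℕ} (hτ : τ * τ = 1)
    (hgen : closure {ρ, τ} = ⊤) (hq : Odd q)
    (h : Nat.card G / orderOf ρ + Nat.card G / (2 * orderOf (τ * (ρ⁻¹ * τ * ρ))) + q =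
      Nat.card G / 2) :
    closure {ρ, τ⁻¹ * ρ * τ} = ⊤ := by
  set H := closure {ρ, τ⁻¹ * ρ * τ}
  set σ := τ * (ρ⁻¹ * τ * ρ)
  have hτinv : τ⁻¹ = τ := inv_eq_of_mul_eq_one_right hτ
  by_contra hne
  have hindex : H.index = 2 :=
    ((Nat.dvd_prime Nat.prime_two).mp (index_closure_pair_conj_dvd_two hτ hgen)).resolve_left
      (mt index_eq_one.mp hne)
  have hρ : ρ ∈ H := subset_closure (by simp)
  have hσ : σ ∈ H := by
    have : σ = (τ⁻¹ * ρ * τ)⁻¹ * ρ := by simp [σ, hτinv, mul_assoc]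
    exact this ▸ mul_mem (inv_mem (subset_closure (by simp))) hρ
  rw [← H.card_mul_index, hindex, mul_comm, Nat.mul_div_assoc _ (H.orderOf_dvd_natCard hρ),
    Nat.mul_div_mul_left _ _ two_pos, Nat.mul_div_cancel_left _ two_pos] at h
  obtain ⟨hσeven, hσodd⟩ := even_and_odd_div_of_two_mul_add (H.orderOf_dvd_natCard hσ) hq h
  -- `ρ σ⁻¹ = τ⁻¹ ρ τ` is conjugate to `ρ`, but multiplying by `σ⁻¹` must change the order
  refine orderOf_mul_ne_orderOf (σ := (⟨σ, hσ⟩ : H)⁻¹) (by rwa [orderOf_inv, orderOf_mk])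
    (by rwa [orderOf_inv, orderOf_mk]) ⟨ρ, hρ⟩ ?_
  rw [← orderOf_coe, orderOf_mk]
  simpa [σ, hτinv, mul_assoc] using (MulAut.conj τ⁻¹).orderOf_eq ρ

end IndexTwo

/-- If `G` is a finite `𝒫₀(p)`-group with respect to `(ρ, τ)`, then `G` is a
`𝒫₁⁺(p)`-group with respect to `(ρ, τ)`. -/
theorem stmt1 {G : Type*} [Group G] [Finite G] {p : ℕ} (hp : p.Prime)
    (ρ τ : G) (h : IsP0 p ρ τ) :
    IsP1Plus p ρ τ := by
  obtain ⟨hτ2, hgen, n, -, h⟩ := h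
  have hττ : τ * τ = 1 := by rw [← pow_two, ← hτ2, pow_orderOf_eq_one]
  have hτ'2 : orderOf (ρ⁻¹ * τ * ρ) = 2 := by
    simpa using ((MulAut.conj ρ⁻¹).orderOf_eq τ).trans hτ2
  obtain ⟨e⟩ := nonempty_mulEquiv_dihedralGroup_of_orderOf_eq_two hτ2 hτ'2
  have hD : Nat.card (closure {τ, ρ⁻¹ * τ * ρ}) = 2 * orderOf (τ * (ρ⁻¹ * τ * ρ)) := by
    rw [Nat.card_congr e.toEquiv, DihedralGroup.nat_card]
  refine ⟨hτ2.le, hgen, fun hodd => ?_, Or.inr ⟨_, orderOf_pos _, ⟨e⟩⟩, Or.inl inferInstance, ?_⟩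
  · rw [show ρ⁻¹ * τ⁻¹ * ρ * τ = ρ⁻¹ * (τ⁻¹ * ρ * τ) by group, closure_inv_mul_pair]
    exact closure_conj_pair_eq_top_of_odd hττ hgen hodd.pow (hD ▸ h)
  · rw [Nat.card_zpowers]
    exact exists_eq_pow_mul_lcm hp (card_subgroup_dvd_card _) (orderOf_dvd_natCard ρ) ⟨_, hD⟩ h
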